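/- arXiv:2301.03420 — 6 statements merged into one kernel-verified Lean document; each statement's English description precedes it below -/
import Mathlib

section
/- Let V = {A,B,C,D,E,F,G,Z} and let F be the twenty facets of ∂H_8 as listed. Suppose φ : V → {1,2,3,4} satisfies φ(A)=1, φ(B)=2, φ(G)=3, φ(Z)=4, the set {C,D,E,F} is rainbow under φ, and no facet of F other than {A,B,G,Z} and {C,D,E,F} is rainbow. Then φ(C) = 1. -/
/-- The eight vertices of Grünbaum's polytope `H₈`. -/
abbrev H8V := Fin 8

namespace H8
def A : H8V := 0
def B : H8V := 1
def C : H8V := 2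
def D : H8V := 3
def E : H8V := 4
def F : H8V := 5
def G : H8V := 6
def Z : H8V := 7

/-- The twenty facets of the boundary complex of `H₈`. -/
def facets : Finset (Finset H8V) :=
  { {A,B,C,D}, {A,B,C,G}, {A,B,D,E}, {A,B,E,F}, {A,B,F,Z},
    {A,B,G,Z}, {A,C,D,Z}, {A,C,G,Z}, {A,D,E,Z}, {A,E,F,Z},
    {B,C,D,E}, {B,C,E,F}, {B,C,F,G}, {B,F,G,Z}, {C,D,E,F},
    {C,D,F,G}, {C,D,G,Z}, {D,E,F,G}, {D,E,G,Z}, {E,F,G,Z} }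

def σ0 : Finset H8V := {A,B,G,Z}
def σ1 : Finset H8V := {C,D,E,F}

/-- A set of vertices is rainbow under a labelling `φ` if `φ` is injective on it.
Labels `1,2,3,4` are represented by `Fin 4` (label `k` being `k-1`). -/
def Rainbow (φ : H8V → Fin 4) (σ : Finset H8V) : Prop := Set.InjOn φ ↑σ

end H8

open H8 in
set_option maxHeartbeats 1000000 in
set_option synthInstance.maxHeartbeats 400000 in
set_option synthInstance.maxSize 2000 in
lemma key : ∀ c d e f : Fin 4,
    (c ≠ d ∧ c ≠ e ∧ c ≠ f ∧ d ≠ e ∧ d ≠ f ∧ e ≠ f) →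
    (¬((0:Fin 4) ≠ (1:Fin 4) ∧ (0:Fin 4) ≠ c ∧ (0:Fin 4) ≠ d ∧ (1:Fin 4) ≠ c ∧ (1:Fin 4) ≠ d ∧ c ≠ d) ∧
     ¬((0:Fin 4) ≠ (1:Fin 4) ∧ (0:Fin 4) ≠ c ∧ (0:Fin 4) ≠ (2:Fin 4) ∧ (1:Fin 4) ≠ c ∧ (1:Fin 4) ≠ (2:Fin 4) ∧ c ≠ (2:Fin 4)) ∧
     ¬((0:Fin 4) ≠ (1:Fin 4) ∧ (0:Fin 4) ≠ d ∧ (0:Fin 4) ≠ e ∧ (1:Fin 4) ≠ d ∧ (1:Fin 4) ≠ e ∧ d ≠ e) ∧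
     ¬((0:Fin 4) ≠ (1:Fin 4) ∧ (0:Fin 4) ≠ e ∧ (0:Fin 4) ≠ f ∧ (1:Fin 4) ≠ e ∧ (1:Fin 4) ≠ f ∧ e ≠ f) ∧
     ¬((0:Fin 4) ≠ (1:Fin 4) ∧ (0:Fin 4) ≠ f ∧ (0:Fin 4) ≠ (3:Fin 4) ∧ (1:Fin 4) ≠ f ∧ (1:Fin 4) ≠ (3:Fin 4) ∧ f ≠ (3:Fin 4)) ∧
     ¬((0:Fin 4) ≠ c ∧ (0:Fin 4) ≠ d ∧ (0:Fin 4) ≠ (3:Fin 4) ∧ c ≠ d ∧ c ≠ (3:Fin 4) ∧ d ≠ (3:Fin 4)) ∧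
     ¬((0:Fin 4) ≠ c ∧ (0:Fin 4) ≠ (2:Fin 4) ∧ (0:Fin 4) ≠ (3:Fin 4) ∧ c ≠ (2:Fin 4) ∧ c ≠ (3:Fin 4) ∧ (2:Fin 4) ≠ (3:Fin 4)) ∧
     ¬((0:Fin 4) ≠ d ∧ (0:Fin 4) ≠ e ∧ (0:Fin 4) ≠ (3:Fin 4) ∧ d ≠ e ∧ d ≠ (3:Fin 4) ∧ e ≠ (3:Fin 4)) ∧
     ¬((0:Fin 4) ≠ e ∧ (0:Fin 4) ≠ f ∧ (0:Fin 4) ≠ (3:Fin 4) ∧ e ≠ f ∧ e ≠ (3:Fin 4) ∧ f ≠ (3:Fin 4)) ∧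
     ¬((1:Fin 4) ≠ c ∧ (1:Fin 4) ≠ d ∧ (1:Fin 4) ≠ e ∧ c ≠ d ∧ c ≠ e ∧ d ≠ e) ∧
     ¬((1:Fin 4) ≠ c ∧ (1:Fin 4) ≠ e ∧ (1:Fin 4) ≠ f ∧ c ≠ e ∧ c ≠ f ∧ e ≠ f) ∧
     ¬((1:Fin 4) ≠ c ∧ (1:Fin 4) ≠ f ∧ (1:Fin 4) ≠ (2:Fin 4) ∧ c ≠ f ∧ c ≠ (2:Fin 4) ∧ f ≠ (2:Fin 4)) ∧
     ¬((1:Fin 4) ≠ f ∧ (1:Fin 4) ≠ (2:Fin 4) ∧ (1:Fin 4) ≠ (3:Fin 4) ∧ f ≠ (2:Fin 4) ∧ f ≠ (3:Fin 4) ∧ (2:Fin 4) ≠ (3:Fin 4)) ∧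
     ¬(c ≠ d ∧ c ≠ f ∧ c ≠ (2:Fin 4) ∧ d ≠ f ∧ d ≠ (2:Fin 4) ∧ f ≠ (2:Fin 4)) ∧
     ¬(c ≠ d ∧ c ≠ (2:Fin 4) ∧ c ≠ (3:Fin 4) ∧ d ≠ (2:Fin 4) ∧ d ≠ (3:Fin 4) ∧ (2:Fin 4) ≠ (3:Fin 4)) ∧
     ¬(d ≠ e ∧ d ≠ f ∧ d ≠ (2:Fin 4) ∧ e ≠ f ∧ e ≠ (2:Fin 4) ∧ f ≠ (2:Fin 4)) ∧
     ¬(d ≠ e ∧ d ≠ (2:Fin 4) ∧ d ≠ (3:Fin 4) ∧ e ≠ (2:Fin 4) ∧ e ≠ (3:Fin 4) ∧ (2:Fin 4) ≠ (3:Fin 4)) ∧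
     ¬(e ≠ f ∧ e ≠ (2:Fin 4) ∧ e ≠ (3:Fin 4) ∧ f ≠ (2:Fin 4) ∧ f ≠ (3:Fin 4) ∧ (2:Fin 4) ≠ (3:Fin 4))) →
    c = 0 := by decide

open H8 in
/-- In the proof of Lemma 5.1: with `A,B,G,Z` labelled `1,2,3,4` (here `0,1,2,3`),
`CDEF` rainbow, and no rainbow facet other than `σ₀` and `σ₁`, the vertex `C`
must get the label of `A`. -/
theorem h8_label_C (φ : H8V → Fin 4)
    (hA : φ A = 0) (hB : φ B = 1) (hG : φ G = 2) (hZ : φ Z = 3)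
    (h1 : Rainbow φ σ1)
    (hno : ∀ τ ∈ facets, τ ≠ σ0 → τ ≠ σ1 → ¬ Rainbow φ τ) :
    φ C = 0 := by
  have rainbow_of : ∀ (p q r s : H8V),
      φ p ≠ φ q ∧ φ p ≠ φ r ∧ φ p ≠ φ s ∧ φ q ≠ φ r ∧ φ q ≠ φ s ∧ φ r ≠ φ s →
      Rainbow φ {p,q,r,s} := by
    rintro p q r s ⟨h1,h2,h3,h4,h5,h6⟩ x hx y hy hxy
    simp only [Finset.coe_insert, Set.mem_insert_iff, Finset.coe_singleton,
      Set.mem_singleton_iff] at hx hy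
    rcases hx with rfl|rfl|rfl|rfl <;> rcases hy with rfl|rfl|rfl|rfl <;>
      first | rfl | (exfalso; exact absurd hxy (by tauto))
  have hdist : φ C ≠ φ D ∧ φ C ≠ φ E ∧ φ C ≠ φ F ∧ φ D ≠ φ E ∧ φ D ≠ φ F ∧ φ E ≠ φ F :=
    ⟨fun h => absurd (h1 (by simp [σ1, C, D, E, F]) (by simp [σ1, C, D, E, F]) h) (by decide),
     fun h => absurd (h1 (by simp [σ1, C, D, E, F]) (by simp [σ1, C, D, E, F]) h) (by decide),
     fun h => absurd (h1 (by simp [σ1, C, D, E, F]) (by simp [σ1, C, D, E, F]) h) (by decide),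
     fun h => absurd (h1 (by simp [σ1, C, D, E, F]) (by simp [σ1, C, D, E, F]) h) (by decide),
     fun h => absurd (h1 (by simp [σ1, C, D, E, F]) (by simp [σ1, C, D, E, F]) h) (by decide),
     fun h => absurd (h1 (by simp [σ1, C, D, E, F]) (by simp [σ1, C, D, E, F]) h) (by decide)⟩
  have hABCD : ¬(φ A ≠ φ B ∧ φ A ≠ φ C ∧ φ A ≠ φ D ∧ φ B ≠ φ C ∧ φ B ≠ φ D ∧ φ C ≠ φ D) :=
    fun h => hno {A,B,C,D} (by decide) (by decide) (by decide) (rainbow_of A B C D h)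
  have hABCG : ¬(φ A ≠ φ B ∧ φ A ≠ φ C ∧ φ A ≠ φ G ∧ φ B ≠ φ C ∧ φ B ≠ φ G ∧ φ C ≠ φ G) :=
    fun h => hno {A,B,C,G} (by decide) (by decide) (by decide) (rainbow_of A B C G h)
  have hABDE : ¬(φ A ≠ φ B ∧ φ A ≠ φ D ∧ φ A ≠ φ E ∧ φ B ≠ φ D ∧ φ B ≠ φ E ∧ φ D ≠ φ E) :=
    fun h => hno {A,B,D,E} (by decide) (by decide) (by decide) (rainbow_of A B D E h)
  have hABEF : ¬(φ A ≠ φ B ∧ φ A ≠ φ E ∧ φ A ≠ φ F ∧ φ B ≠ φ E ∧ φ B ≠ φ F ∧ φ E ≠ φ F) :=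
    fun h => hno {A,B,E,F} (by decide) (by decide) (by decide) (rainbow_of A B E F h)
  have hABFZ : ¬(φ A ≠ φ B ∧ φ A ≠ φ F ∧ φ A ≠ φ Z ∧ φ B ≠ φ F ∧ φ B ≠ φ Z ∧ φ F ≠ φ Z) :=
    fun h => hno {A,B,F,Z} (by decide) (by decide) (by decide) (rainbow_of A B F Z h)
  have hACDZ : ¬(φ A ≠ φ C ∧ φ A ≠ φ D ∧ φ A ≠ φ Z ∧ φ C ≠ φ D ∧ φ C ≠ φ Z ∧ φ D ≠ φ Z) :=
    fun h => hno {A,C,D,Z} (by decide) (by decide) (by decide) (rainbow_of A C D Z h)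
  have hACGZ : ¬(φ A ≠ φ C ∧ φ A ≠ φ G ∧ φ A ≠ φ Z ∧ φ C ≠ φ G ∧ φ C ≠ φ Z ∧ φ G ≠ φ Z) :=
    fun h => hno {A,C,G,Z} (by decide) (by decide) (by decide) (rainbow_of A C G Z h)
  have hADEZ : ¬(φ A ≠ φ D ∧ φ A ≠ φ E ∧ φ A ≠ φ Z ∧ φ D ≠ φ E ∧ φ D ≠ φ Z ∧ φ E ≠ φ Z) :=
    fun h => hno {A,D,E,Z} (by decide) (by decide) (by decide) (rainbow_of A D E Z h)
  have hAEFZ : ¬(φ A ≠ φ E ∧ φ A ≠ φ F ∧ φ A ≠ φ Z ∧ φ E ≠ φ F ∧ φ E ≠ φ Z ∧ φ F ≠ φ Z) :=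
    fun h => hno {A,E,F,Z} (by decide) (by decide) (by decide) (rainbow_of A E F Z h)
  have hBCDE : ¬(φ B ≠ φ C ∧ φ B ≠ φ D ∧ φ B ≠ φ E ∧ φ C ≠ φ D ∧ φ C ≠ φ E ∧ φ D ≠ φ E) :=
    fun h => hno {B,C,D,E} (by decide) (by decide) (by decide) (rainbow_of B C D E h)
  have hBCEF : ¬(φ B ≠ φ C ∧ φ B ≠ φ E ∧ φ B ≠ φ F ∧ φ C ≠ φ E ∧ φ C ≠ φ F ∧ φ E ≠ φ F) :=
    fun h => hno {B,C,E,F} (by decide) (by decide) (by decide) (rainbow_of B C E F h)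
  have hBCFG : ¬(φ B ≠ φ C ∧ φ B ≠ φ F ∧ φ B ≠ φ G ∧ φ C ≠ φ F ∧ φ C ≠ φ G ∧ φ F ≠ φ G) :=
    fun h => hno {B,C,F,G} (by decide) (by decide) (by decide) (rainbow_of B C F G h)
  have hBFGZ : ¬(φ B ≠ φ F ∧ φ B ≠ φ G ∧ φ B ≠ φ Z ∧ φ F ≠ φ G ∧ φ F ≠ φ Z ∧ φ G ≠ φ Z) :=
    fun h => hno {B,F,G,Z} (by decide) (by decide) (by decide) (rainbow_of B F G Z h)
  have hCDFG : ¬(φ C ≠ φ D ∧ φ C ≠ φ F ∧ φ C ≠ φ G ∧ φ D ≠ φ F ∧ φ D ≠ φ G ∧ φ F ≠ φ G) :=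
    fun h => hno {C,D,F,G} (by decide) (by decide) (by decide) (rainbow_of C D F G h)
  have hCDGZ : ¬(φ C ≠ φ D ∧ φ C ≠ φ G ∧ φ C ≠ φ Z ∧ φ D ≠ φ G ∧ φ D ≠ φ Z ∧ φ G ≠ φ Z) :=
    fun h => hno {C,D,G,Z} (by decide) (by decide) (by decide) (rainbow_of C D G Z h)
  have hDEFG : ¬(φ D ≠ φ E ∧ φ D ≠ φ F ∧ φ D ≠ φ G ∧ φ E ≠ φ F ∧ φ E ≠ φ G ∧ φ F ≠ φ G) :=
    fun h => hno {D,E,F,G} (by decide) (by decide) (by decide) (rainbow_of D E F G h)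
  have hDEGZ : ¬(φ D ≠ φ E ∧ φ D ≠ φ G ∧ φ D ≠ φ Z ∧ φ E ≠ φ G ∧ φ E ≠ φ Z ∧ φ G ≠ φ Z) :=
    fun h => hno {D,E,G,Z} (by decide) (by decide) (by decide) (rainbow_of D E G Z h)
  have hEFGZ : ¬(φ E ≠ φ F ∧ φ E ≠ φ G ∧ φ E ≠ φ Z ∧ φ F ≠ φ G ∧ φ F ≠ φ Z ∧ φ G ≠ φ Z) :=
    fun h => hno {E,F,G,Z} (by decide) (by decide) (by decide) (rainbow_of E F G Z h)
  simp only [hA, hB, hG, hZ] at hABCD hABCG hABDE hABEF hABFZ hACDZ hACGZ hADEZ hAEFZ hBCDE hBCEF hBCFG hBFGZ hCDFG hCDGZ hDEFG hDEGZ hEFGZ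
  exact key (φ C) (φ D) (φ E) (φ F) hdist ⟨hABCD, hABCG, hABDE, hABEF, hABFZ, hACDZ, hACGZ, hADEZ, hAEFZ, hBCDE, hBCEF, hBCFG, hBFGZ, hCDFG, hCDGZ, hDEFG, hDEGZ, hEFGZ⟩
end

section
/- Let V = {A,B,C,D,E,F,G,Z} and let F be the twenty facets of ∂H_8 as listed. There is no labelling φ : V → {1,2,3,4} such that {A,B,G,Z} and {C,D,E,F} are the only rainbow facets of F. -/
open H8

/-- Four pairwise-distinct values. -/
def rb (w x y z : Fin 4) : Prop :=
  w ≠ x ∧ w ≠ y ∧ w ≠ z ∧ x ≠ y ∧ x ≠ z ∧ y ≠ z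

instance (w x y z : Fin 4) : Decidable (rb w x y z) := by
  unfold rb; infer_instance

lemma card4 : ∀ w x y z : Fin 4,
    ({w,x,y,z} : Finset (Fin 4)).card = 4 ↔ rb w x y z := by decide

lemma rainbow_iff_rb (φ : H8V → Fin 4) (a b c d : H8V)
    (h : ({a,b,c,d} : Finset H8V).card = 4) :
    Rainbow φ {a,b,c,d} ↔ rb (φ a) (φ b) (φ c) (φ d) := by
  rw [Rainbow, ← Finset.card_image_iff, h, Finset.image_insert, Finset.image_insert,
    Finset.image_insert, Finset.image_singleton]
  exact card4 _ _ _ _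

set_option synthInstance.maxSize 2000 in
set_option synthInstance.maxHeartbeats 1000000 in
set_option maxHeartbeats 10000000 in
set_option maxRecDepth 100000 in
lemma key_s2 : ∀ va vb vc vd ve vf vg vz : Fin 4,
    ¬ (rb va vb vg vz ∧ rb vc vd ve vf ∧
      (¬ (rb va vb vc vd)) ∧
      (¬ (rb va vb vc vg)) ∧
      (¬ (rb va vb vd ve)) ∧
      (¬ (rb va vb ve vf)) ∧
      (¬ (rb va vb vf vz)) ∧
      (¬ (rb va vc vd vz)) ∧
      (¬ (rb va vc vg vz)) ∧
      (¬ (rb va vd ve vz)) ∧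
      (¬ (rb va ve vf vz)) ∧
      (¬ (rb vb vc vd ve)) ∧
      (¬ (rb vb vc ve vf)) ∧
      (¬ (rb vb vc vf vg)) ∧
      (¬ (rb vb vf vg vz)) ∧
      (¬ (rb vc vd vf vg)) ∧
      (¬ (rb vc vd vg vz)) ∧
      (¬ (rb vd ve vf vg)) ∧
      (¬ (rb vd ve vg vz)) ∧
      (¬ (rb ve vf vg vz))) := by decide

open H8 in
/-- There is no labelling of the vertices of `H₈` by four labels whose rainbow
facets are exactly `σ₀ = ABGZ` and `σ₁ = CDEF`. -/
theorem h8_no_two_rainbow_labelling :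
    ¬ ∃ φ : H8V → Fin 4, ∀ τ ∈ facets, (Rainbow φ τ ↔ τ = σ0 ∨ τ = σ1) := by
  rintro ⟨φ, h⟩
  refine key_s2 (φ A) (φ B) (φ C) (φ D) (φ E) (φ F) (φ G) (φ Z) ⟨?_, ?_, ?_, ?_, ?_, ?_, ?_, ?_, ?_, ?_, ?_, ?_, ?_, ?_, ?_, ?_, ?_, ?_, ?_, ?_⟩
  · exact (rainbow_iff_rb φ A B G Z (by decide)).mp ((h σ0 (by decide)).mpr (Or.inl rfl))
  · exact (rainbow_iff_rb φ C D E F (by decide)).mp ((h σ1 (by decide)).mpr (Or.inr rfl))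
  · exact fun hrb => absurd ((h {A,B,C,D} (by decide)).mp ((rainbow_iff_rb φ A B C D (by decide)).mpr hrb)) (by decide)
  · exact fun hrb => absurd ((h {A,B,C,G} (by decide)).mp ((rainbow_iff_rb φ A B C G (by decide)).mpr hrb)) (by decide)
  · exact fun hrb => absurd ((h {A,B,D,E} (by decide)).mp ((rainbow_iff_rb φ A B D E (by decide)).mpr hrb)) (by decide)
  · exact fun hrb => absurd ((h {A,B,E,F} (by decide)).mp ((rainbow_iff_rb φ A B E F (by decide)).mpr hrb)) (by decide)
  · exact fun hrb => absurd ((h {A,B,F,Z} (by decide)).mp ((rainbow_iff_rb φ A B F Z (by decide)).mpr hrb)) (by decide)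
  · exact fun hrb => absurd ((h {A,C,D,Z} (by decide)).mp ((rainbow_iff_rb φ A C D Z (by decide)).mpr hrb)) (by decide)
  · exact fun hrb => absurd ((h {A,C,G,Z} (by decide)).mp ((rainbow_iff_rb φ A C G Z (by decide)).mpr hrb)) (by decide)
  · exact fun hrb => absurd ((h {A,D,E,Z} (by decide)).mp ((rainbow_iff_rb φ A D E Z (by decide)).mpr hrb)) (by decide)
  · exact fun hrb => absurd ((h {A,E,F,Z} (by decide)).mp ((rainbow_iff_rb φ A E F Z (by decide)).mpr hrb)) (by decide)
  · exact fun hrb => absurd ((h {B,C,D,E} (by decide)).mp ((rainbow_iff_rb φ B C D E (by decide)).mpr hrb)) (by decide)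
  · exact fun hrb => absurd ((h {B,C,E,F} (by decide)).mp ((rainbow_iff_rb φ B C E F (by decide)).mpr hrb)) (by decide)
  · exact fun hrb => absurd ((h {B,C,F,G} (by decide)).mp ((rainbow_iff_rb φ B C F G (by decide)).mpr hrb)) (by decide)
  · exact fun hrb => absurd ((h {B,F,G,Z} (by decide)).mp ((rainbow_iff_rb φ B F G Z (by decide)).mpr hrb)) (by decide)
  · exact fun hrb => absurd ((h {C,D,F,G} (by decide)).mp ((rainbow_iff_rb φ C D F G (by decide)).mpr hrb)) (by decide)
  · exact fun hrb => absurd ((h {C,D,G,Z} (by decide)).mp ((rainbow_iff_rb φ C D G Z (by decide)).mpr hrb)) (by decide)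
  · exact fun hrb => absurd ((h {D,E,F,G} (by decide)).mp ((rainbow_iff_rb φ D E F G (by decide)).mpr hrb)) (by decide)
  · exact fun hrb => absurd ((h {D,E,G,Z} (by decide)).mp ((rainbow_iff_rb φ D E G Z (by decide)).mpr hrb)) (by decide)
  · exact fun hrb => absurd ((h {E,F,G,Z} (by decide)).mp ((rainbow_iff_rb φ E F G Z (by decide)).mpr hrb)) (by decide)
end

section
/- If a labelling φ : V → {1,2,3,4} of the vertex set V = {A,B,C,D,E,F,G,Z} of ∂H_8 is such that the facets σ₀ = {A,B,G,Z} and σ₁ = {C,D,E,F} are the only rainbow facets, and τ is a facet sharing exactly three vertices with σ_i (i ∈ {0,1}), then the two vertices in the symmetric difference τ Δ σ_i receive different labels under φ. -/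
open H8 in
/-- Claim 5.2: if `σ₀` and `σ₁` are the only rainbow facets of `∂H₈` under `φ`,
and a facet `τ` shares exactly three vertices with `σᵢ` (`i ∈ {0,1}`), then the
two vertices of the symmetric difference `τ Δ σᵢ` get different labels. -/
theorem h8_symmDiff_labels (φ : H8V → Fin 4)
    (h0 : Rainbow φ σ0) (h1 : Rainbow φ σ1)
    (hno : ∀ τ ∈ facets, Rainbow φ τ → τ = σ0 ∨ τ = σ1)
    (τ : Finset H8V) (hτ : τ ∈ facets) (σ : Finset H8V) (hσ : σ = σ0 ∨ σ = σ1)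
    (hshare : (τ ∩ σ).card = 3) :
    ∀ x ∈ τ \ σ, ∀ y ∈ σ \ τ, φ x ≠ φ y := by
  intro x hx y hy heq
  rw [Finset.mem_sdiff] at hx hy
  obtain ⟨hxτ, hxσ⟩ := hx
  obtain ⟨hyσ, hyτ⟩ := hy
  have hσR : Rainbow φ σ := by rcases hσ with h | h <;> subst h <;> assumption
  have hτ4 : τ.card = 4 := by fin_cases hτ <;> decide
  have hsub : τ ∩ σ ⊆ τ := Finset.inter_subset_left
  have hsd : τ \ σ = {x} := by
    have h1 : (τ \ σ).card = 1 := by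
      have : τ \ σ = τ \ (τ ∩ σ) := by
        ext a; simp [Finset.mem_sdiff, Finset.mem_inter]
      rw [this, Finset.card_sdiff_of_subset hsub, hτ4, hshare]
    obtain ⟨a, ha⟩ := Finset.card_eq_one.mp h1
    have hxa : x ∈ τ \ σ := Finset.mem_sdiff.mpr ⟨hxτ, hxσ⟩
    rw [ha] at hxa ⊢
    rw [Finset.mem_singleton] at hxa
    rw [hxa]
  have huniq : ∀ b ∈ τ, b ∉ σ → b = x := by
    intro b hb hbσ
    have : b ∈ τ \ σ := Finset.mem_sdiff.mpr ⟨hb, hbσ⟩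
    rw [hsd, Finset.mem_singleton] at this; exact this
  have hτR : Rainbow φ τ := by
    intro a ha b hb hab
    rw [Finset.mem_coe] at ha hb
    by_cases haσ : a ∈ σ <;> by_cases hbσ : b ∈ σ
    · exact hσR haσ hbσ hab
    · have hbx : b = x := huniq b hb hbσ
      rw [hbx] at hab
      have : a = y := hσR haσ hyσ (hab.trans heq)
      exact absurd (this ▸ ha) hyτ
    · have hax : a = x := huniq a ha haσ
      rw [hax] at hab
      have : y = b := hσR hyσ hbσ (heq.symm.trans hab)
      exact absurd (this ▸ hb) hyτ
    · rw [huniq a ha haσ, huniq b hb hbσ]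
  rcases hno τ hτ hτR with h | h <;> rcases hσ with h' | h' <;> subst h <;> subst h'
  · exact hxσ hxτ
  · revert hshare; decide
  · revert hshare; decide
  · exact hxσ hxτ
end

section
/- Let K be a finite abstract simplicial complex triangulating the d-simplex Δ^d with boundary vertices v₁,…,v_{d+1}, and let G_K be Gallai's graph: vertices are the vertices of K, a vertex v_ρ for each facet ρ of K, and a vertex w_σ for each facet σ of Δ^d; edges join u to v_ρ when u ∈ ρ, u to w_σ when u lies in σ, and all pairs w_σ w_τ. Then G_K admits no proper (d+1)-colouring if and only if every Sperner labelling of K has a rainbow facet. -/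
open Geometry

/-- A (finite) triangulation of the `d`-simplex: a finite geometric simplicial
complex in `ℝ^d` whose underlying space is the convex hull of `d+1` affinely
independent points (the corners of `Δ^d`). -/
structure SimplexTriangulation (d : ℕ) where
  K : Geometry.SimplicialComplex ℝ (EuclideanSpace ℝ (Fin d))
  corner : Fin (d + 1) → EuclideanSpace ℝ (Fin d)
  indep : AffineIndependent ℝ corner
  finite : K.faces.Finite
  space_eq : K.space = convexHull ℝ (Set.range corner)

namespace SimplexTriangulation

variable {d : ℕ}

/-- Facets of the triangulation: faces with `d+1` vertices (i.e. `d`-simplices). -/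
def IsFacet (T : SimplexTriangulation d) (σ : Finset (EuclideanSpace ℝ (Fin d))) : Prop :=
  σ ∈ T.K.faces ∧ σ.card = d + 1

/-- A Sperner labelling: each corner `vᵢ` of `Δ^d` gets label `i`, and any vertex
of the triangulation lying in a face of `Δ^d` (the convex hull of a set of
corners) gets the label of one of the corners of that face. -/
def IsSperner (T : SimplexTriangulation d)
    (l : EuclideanSpace ℝ (Fin d) → Fin (d + 1)) : Prop :=
  (∀ i, l (T.corner i) = i) ∧
  ∀ x ∈ T.K.vertices, ∀ s : Set (Fin (d + 1)),
    x ∈ convexHull ℝ (T.corner '' s) → ∃ i ∈ s, l x = i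

end SimplexTriangulation

/-- A simplex is rainbow when the labelling is injective on its vertices. -/
def Rainbow {α : Type*} {m : ℕ} (l : α → Fin m) (σ : Finset α) : Prop :=
  Set.InjOn l ↑σ

namespace SimplexTriangulation

variable {d : ℕ}

/-- Vertices of Gallai's graph `G_K`: (V1) vertices of `K`, (V2) a vertex `v_ρ`
for each facet `ρ` of `K`, (V3) a vertex `w_σ` for each of the `d+1` facets of
`Δ^d` (indexed by the opposite corner). -/
def GallaiVertex (T : SimplexTriangulation d) : Type :=
  ↥T.K.vertices ⊕ {σ // T.IsFacet σ} ⊕ Fin (d + 1)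

/-- The generating relation of Gallai's graph: `u ∼ v_ρ` when `u ∈ ρ`;
`u ∼ w_j` when `u` lies in the facet of `Δ^d` opposite to corner `j`;
and all pairs of type-(V3) vertices are adjacent. -/
def gallaiRel (T : SimplexTriangulation d) :
    T.GallaiVertex → T.GallaiVertex → Prop
  | Sum.inl u, Sum.inr (Sum.inl ρ) => (u : EuclideanSpace ℝ (Fin d)) ∈ ρ.1
  | Sum.inl u, Sum.inr (Sum.inr j) =>
      (u : EuclideanSpace ℝ (Fin d)) ∈ convexHull ℝ (T.corner '' {i | i ≠ j})
  | Sum.inr (Sum.inr _), Sum.inr (Sum.inr _) => True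
  | _, _ => False

/-- Gallai's graph `G_K` associated with a triangulation `K` of `Δ^d`. -/
def GallaiGraph (T : SimplexTriangulation d) : SimpleGraph T.GallaiVertex :=
  SimpleGraph.fromRel (gallaiRel T)

end SimplexTriangulation

/-!
Given a Sperner labelling without a rainbow facet, colour each vertex of `K` by its label, each
`v_ρ` by a label missing from `ρ`, and `w_j` by `j`: this is a proper colouring of `G_K`.
Conversely, the clique on the `w_j` forces a proper `(d+1)`-colouring `c` to use every colour there
once, so `x ↦ j` with `c x = c w_j` is a labelling; a vertex `x` with label `j` is not adjacent to
`w_j`, hence avoids the face of `Δ^d` opposite `vⱼ`, which is the Sperner condition; and a rainbow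
facet `ρ` would contain a vertex coloured like `v_ρ`.
-/

theorem SimpleGraph.nonempty_coloring_fromRel_of_forall_ne {V α : Type*} {r : V → V → Prop} (f : V → α)
    (hf : ∀ ⦃a b⦄, a ≠ b → r a b → f a ≠ f b) : Nonempty ((SimpleGraph.fromRel r).Coloring α) :=
  ⟨SimpleGraph.Coloring.mk f fun {a b} hab => by
    obtain ⟨hne, h | h⟩ := (SimpleGraph.fromRel_adj r a b).mp hab
    · exact hf hne h
    · exact (hf hne.symm h).symm⟩

theorem rainbow_iff_image_eq_univ {α : Type*} [DecidableEq α] {m : ℕ} {l : α → Fin m}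
    {σ : Finset α} (hσ : σ.card = m) : Rainbow l σ ↔ σ.image l = Finset.univ := by
  rw [Rainbow, ← Finset.card_image_iff, hσ, ← Finset.card_eq_iff_eq_univ, Fintype.card_fin]

namespace SimplexTriangulation

variable {d : ℕ} (T : SimplexTriangulation d)

theorem colorable_of_isSperner_of_forall_not_rainbow {l : EuclideanSpace ℝ (Fin d) → Fin (d + 1)}
    (hl : T.IsSperner l) (hno : ∀ σ, T.IsFacet σ → ¬ Rainbow l σ) :
    T.GallaiGraph.Colorable (d + 1) := by
  classical
  have missing (ρ : {σ // T.IsFacet σ}) : ∃ j, j ∉ ρ.1.image l := by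
    by_contra! h
    exact hno ρ.1 ρ.2 ((rainbow_iff_image_eq_univ ρ.2.2).mpr (Finset.eq_univ_iff_forall.mpr h))
  choose m hm using missing
  refine SimpleGraph.nonempty_coloring_fromRel_of_forall_ne
    (Sum.elim (fun u => l u) (Sum.elim m id)) ?_
  rintro (u | ρ | j) (u' | ρ' | j') hne h <;> simp only [gallaiRel] at h
  · exact fun hu => hm ρ' (Finset.mem_image.mpr ⟨u, h, hu⟩)
  · obtain ⟨i, hi, hu⟩ := hl.2 u u.2 _ h
    simpa [hu] using hi
  · simpa using fun hj => hne (congrArg (Sum.inr ∘ Sum.inr) hj)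

section Coloring

variable {T} (c : T.GallaiGraph.Coloring (Fin (d + 1)))

theorem gallaiGraph_adj_corner {j j' : Fin (d + 1)} (h : j ≠ j') :
    T.GallaiGraph.Adj (Sum.inr (Sum.inr j)) (Sum.inr (Sum.inr j')) :=
  (SimpleGraph.fromRel_adj _ _ _).mpr
    ⟨fun h' => h (Sum.inr_injective (Sum.inr_injective h')), Or.inl trivial⟩

noncomputable def cornerColorEquiv : Fin (d + 1) ≃ Fin (d + 1) :=
  Equiv.ofBijective (fun j => c (Sum.inr (Sum.inr j))) <| Finite.injective_iff_bijective.mp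
    fun _ _ h => by_contra fun hne => c.valid (gallaiGraph_adj_corner hne) h

theorem cornerColorEquiv_symm_mem {x : T.K.vertices} {s : Set (Fin (d + 1))}
    (hx : (x : EuclideanSpace ℝ (Fin d)) ∈ convexHull ℝ (T.corner '' s)) :
    (cornerColorEquiv c).symm (c (Sum.inl x)) ∈ s := by
  by_contra hj
  set j := (cornerColorEquiv c).symm (c (Sum.inl x))
  have hside : (x : EuclideanSpace ℝ (Fin d)) ∈ convexHull ℝ (T.corner '' {i | i ≠ j}) :=
    convexHull_mono (Set.image_mono fun i (hi : i ∈ s) (hij : i = j) => hj (hij ▸ hi)) hx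
  have hadj : T.GallaiGraph.Adj (Sum.inl x) (Sum.inr (Sum.inr j)) :=
    (SimpleGraph.fromRel_adj _ _ _).mpr ⟨Sum.inl_ne_inr, Or.inl hside⟩
  exact c.valid hadj ((cornerColorEquiv c).apply_symm_apply _).symm

/-- Off the vertices of `K` only the corners matter, and `Function.invFun` labels them correctly
without knowing that they are vertices of `K`. -/
noncomputable def labelOfColoring (x : EuclideanSpace ℝ (Fin d)) : Fin (d + 1) :=
  open Classical in
  if hx : x ∈ T.K.vertices then (cornerColorEquiv c).symm (c (Sum.inl ⟨x, hx⟩))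
  else Function.invFun T.corner x

theorem labelOfColoring_of_mem {x : EuclideanSpace ℝ (Fin d)} (hx : x ∈ T.K.vertices) :
    labelOfColoring c x = (cornerColorEquiv c).symm (c (Sum.inl ⟨x, hx⟩)) :=
  dif_pos hx

theorem isSperner_labelOfColoring : T.IsSperner (labelOfColoring c) := by
  refine ⟨fun i => ?_, fun x hx s hxs => ⟨_, cornerColorEquiv_symm_mem c hxs,
    labelOfColoring_of_mem c hx⟩⟩
  by_cases hi : T.corner i ∈ T.K.vertices
  · rw [labelOfColoring_of_mem c hi]
    simpa using cornerColorEquiv_symm_mem c (x := ⟨_, hi⟩) (s := {i})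
      (subset_convexHull ℝ _ ⟨i, rfl, rfl⟩)
  · rw [labelOfColoring, dif_neg hi]
    exact Function.leftInverse_invFun T.indep.injective i

theorem not_rainbow_labelOfColoring {σ : Finset (EuclideanSpace ℝ (Fin d))} (hσ : T.IsFacet σ) :
    ¬ Rainbow (labelOfColoring c) σ := by
  classical
  intro hr
  have hvert (u) (hu : u ∈ σ) : u ∈ T.K.vertices :=
    T.K.down_closed hσ.1 (Finset.singleton_subset_iff.mpr hu) (Finset.singleton_nonempty u)
  obtain ⟨u, hu, hlu⟩ := Finset.mem_image.mp <|
    ((rainbow_iff_image_eq_univ hσ.2).mp hr).symm ▸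
      Finset.mem_univ ((cornerColorEquiv c).symm (c (Sum.inr (Sum.inl ⟨σ, hσ⟩))))
  have hadj : T.GallaiGraph.Adj (Sum.inl ⟨u, hvert u hu⟩) (Sum.inr (Sum.inl ⟨σ, hσ⟩)) :=
    (SimpleGraph.fromRel_adj _ _ _).mpr ⟨Sum.inl_ne_inr, Or.inl hu⟩
  rw [labelOfColoring_of_mem c (hvert u hu)] at hlu
  exact c.valid hadj ((cornerColorEquiv c).symm.injective hlu)

end Coloring

end SimplexTriangulation

/-- Proposition 3.1: Gallai's graph `G_K` admits no proper `(d+1)`-colouring if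
and only if every Sperner labelling of `K` has a rainbow facet. -/
theorem gallai_not_colorable_iff_sperner {d : ℕ} (T : SimplexTriangulation d) :
    ¬ (T.GallaiGraph).Colorable (d + 1) ↔
      ∀ l : EuclideanSpace ℝ (Fin d) → Fin (d + 1), T.IsSperner l →
        ∃ σ, T.IsFacet σ ∧ Rainbow l σ := by
  constructor
  · intro hnc l hl
    by_contra! hno
    exact hnc (T.colorable_of_isSperner_of_forall_not_rainbow hl hno)
  · rintro hall ⟨c⟩
    obtain ⟨σ, hσ, hr⟩ := hall _ (SimplexTriangulation.isSperner_labelOfColoring c)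
    exact SimplexTriangulation.not_rainbow_labelOfColoring c hσ hr
end

section
/- Let e = w_σ w_τ be an edge of Gallai's graph G_K joining two type-(V3) vertices. Then G_K − e admits a proper (d+1)-colouring. -/
open Geometry

section MergeValue

variable {α : Type*} [DecidableEq α] {j j' : α}

theorem Function.update_id_ne_self_of_ne (hjj' : j ≠ j') (k : α) :
    Function.update id j' j k ≠ j' := by
  rw [Function.update_apply]
  split_ifs with hk
  · exact hjj'
  · exact hk

theorem Function.sym2_eq_of_update_id_eq {k m : α} (hkm : k ≠ m)
    (h : Function.update id j' j k = Function.update id j' j m) : s(k, m) = s(j, j') := by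
  simp only [Function.update_apply, id] at h
  split_ifs at h with hk hm hm
  · exact absurd (hk.trans hm.symm) hkm
  · rw [hk, ← h, Sym2.eq_swap]
  · rw [hm, h]
  · exact absurd h hkm

end MergeValue

namespace SimplexTriangulation

variable {d : ℕ} (T : SimplexTriangulation d)

/-- Colour `w_{j'}` like `w_j`, which frees colour `j'` for the type-(V1) vertices;
the type-(V2) vertices, adjacent only to type-(V1) ones, get colour `j`. -/
def mergedColoring (j j' : Fin (d + 1)) : T.GallaiVertex → Fin (d + 1)
  | Sum.inl _ => j'
  | Sum.inr (Sum.inl _) => j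
  | Sum.inr (Sum.inr k) => Function.update id j' j k

variable {T}

theorem mergedColoring_ne_of_gallaiRel {j j' : Fin (d + 1)} (hjj' : j ≠ j')
    {a b : T.GallaiVertex} (hab : a ≠ b) (hrel : T.gallaiRel a b)
    (hne : s(a, b) ≠ s(Sum.inr (Sum.inr j), Sum.inr (Sum.inr j'))) :
    T.mergedColoring j j' a ≠ T.mergedColoring j j' b := by
  rcases a with u | ρ | k <;> rcases b with u' | ρ' | m <;>
    simp only [gallaiRel] at hrel <;> simp only [mergedColoring]
  · exact hjj'.symm
  · exact (Function.update_id_ne_self_of_ne hjj' m).symm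
  · have hkm : k ≠ m := fun h => hab (h ▸ rfl)
    refine fun h => hne ?_
    rcases Sym2.eq_iff.mp (Function.sym2_eq_of_update_id_eq hkm h) with ⟨rfl, rfl⟩ | ⟨rfl, rfl⟩
    · rfl
    · exact Sym2.eq_swap

def deleteV3EdgeColoring {j j' : Fin (d + 1)} (hjj' : j ≠ j') :
    (T.GallaiGraph.deleteEdges {s(Sum.inr (Sum.inr j), Sum.inr (Sum.inr j'))}).Coloring
      (Fin (d + 1)) :=
  SimpleGraph.Coloring.mk (T.mergedColoring j j') fun {a b} hadj => by
    obtain ⟨⟨hab, hrel⟩, hne⟩ := SimpleGraph.deleteEdges_adj.mp hadj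
    replace hne := Set.mem_singleton_iff.not.mp hne
    rcases hrel with hrel | hrel
    · exact mergedColoring_ne_of_gallaiRel hjj' hab hrel hne
    · refine (mergedColoring_ne_of_gallaiRel hjj' hab.symm hrel ?_).symm
      rwa [Sym2.eq_swap]

end SimplexTriangulation

theorem gallai_deleteV3Edge_colorable_general {d : ℕ} (T : SimplexTriangulation d)
    (j j' : Fin (d + 1)) (hjj' : j ≠ j') :
    ((T.GallaiGraph).deleteEdges
        {s(Sum.inr (Sum.inr j), Sum.inr (Sum.inr j'))}).Colorable (d + 1) :=
  ⟨SimplexTriangulation.deleteV3EdgeColoring hjj'⟩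

/-- Deleting an edge of `G_K` joining two type-(V3) vertices `w_σ w_τ` leaves a
`(d+1)`-colourable graph. -/
theorem gallai_deleteV3Edge_colorable {d : ℕ} (T : SimplexTriangulation d)
    (j j' : Fin (d + 1)) (hjj' : j ≠ j')
    (he : (T.GallaiGraph).Adj (Sum.inr (Sum.inr j)) (Sum.inr (Sum.inr j'))) :
    ((T.GallaiGraph).deleteEdges
        {s(Sum.inr (Sum.inr j), Sum.inr (Sum.inr j'))}).Colorable (d + 1) :=
  gallai_deleteV3Edge_colorable_general T j j' hjj'
end

section
/- Let K be the complex on V = {A,B,C,D,E,F,G,Z} whose facets are the nineteen facets of ∂H_8 other than σ₀ = {A,B,G,Z}, let ρ be a (d−4)-simplex with vertex set W disjoint from V (d ≥ 3, with W = ∅ when d = 3), and let K_d = K ⋆ ρ, a triangulation of the d-simplex on corner set {A,B,G,Z} ∪ W. Then for every Sperner labelling λ of K_d, if the facet σ = {C,D,E,F} ∪ W is rainbow, the restriction of λ to V takes exactly the four values λ(A), λ(B), λ(G), λ(Z), and these equal the values of λ on {C,D,E,F}. -/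
set_option maxHeartbeats 2000000 in
open H8 Sum in
/-- In the proof of Theorem 1.4: `K_d = K ⋆ ρ` where `K` is `∂H₈` minus `σ₀`
(a triangulation of the `3`-simplex on corners `A,B,G,Z`) and `ρ` is a
`(d-4)`-simplex on a disjoint vertex set `W ≅ Fin (d-3)`. For any Sperner
labelling `lam` of `K_d` (corners get their own labels, here `A,B,G,Z ↦ 0,1,2,3`
and the `j`-th vertex of `W ↦ j+4`; the vertices of `K` lie in the face
`conv{A,B,G,Z}` of `Δ^d`, so get labels `< 4`), if the facet
`σ = {C,D,E,F} ∪ W` is rainbow then `lam` restricted to the vertices of `K`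
takes exactly the four values of `lam` on `A,B,G,Z`, and these coincide with
its values on `C,D,E,F`. -/
theorem join_sperner_labels (d : ℕ) (hd : 3 ≤ d)
    (lam : H8V ⊕ Fin (d - 3) → Fin (d + 1))
    (hA : lam (inl A) = ⟨0, by omega⟩) (hB : lam (inl B) = ⟨1, by omega⟩)
    (hG : lam (inl G) = ⟨2, by omega⟩) (hZ : lam (inl Z) = ⟨3, by omega⟩)
    (hW : ∀ j : Fin (d - 3), lam (inr j) = ⟨(j : ℕ) + 4, by omega⟩)
    (hface : ∀ x : H8V, (lam (inl x) : ℕ) < 4)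
    (hrainbow : Set.InjOn lam
      ({inl C, inl D, inl E, inl F} ∪ Set.range inr)) :
    (Set.range fun x : H8V => lam (inl x)) =
        {lam (inl A), lam (inl B), lam (inl G), lam (inl Z)} ∧
      ({lam (inl A), lam (inl B), lam (inl G), lam (inl Z)} : Set (Fin (d + 1))) =
        {lam (inl C), lam (inl D), lam (inl E), lam (inl F)} := by

  -- distinctness of the labels on C,D,E,F
  have mem : ∀ x : H8V, (inl x : H8V ⊕ Fin (d-3)) ∈
      ({inl C, inl D, inl E, inl F} ∪ Set.range inr : Set (H8V ⊕ Fin (d-3))) ∨ True :=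
    fun _ => Or.inr trivial
  have hCD : lam (inl C) ≠ lam (inl D) := fun h => by
    have := hrainbow (by simp) (by simp) h; simp [C, D] at this
  have hCE : lam (inl C) ≠ lam (inl E) := fun h => by
    have := hrainbow (by simp) (by simp) h; simp [C, E] at this
  have hCF : lam (inl C) ≠ lam (inl F) := fun h => by
    have := hrainbow (by simp) (by simp) h; simp [C, F] at this
  have hDE : lam (inl D) ≠ lam (inl E) := fun h => by
    have := hrainbow (by simp) (by simp) h; simp [D, E] at this
  have hDF : lam (inl D) ≠ lam (inl F) := fun h => by
    have := hrainbow (by simp) (by simp) h; simp [D, F] at this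
  have hEF : lam (inl E) ≠ lam (inl F) := fun h => by
    have := hrainbow (by simp) (by simp) h; simp [E, F] at this
  have ha : (lam (inl C)).val < 4 := hface C
  have hb : (lam (inl D)).val < 4 := hface D
  have hc : (lam (inl E)).val < 4 := hface E
  have he : (lam (inl F)).val < 4 := hface F
  have hab : (lam (inl C)).val ≠ (lam (inl D)).val := fun h => hCD (Fin.ext h)
  have hac : (lam (inl C)).val ≠ (lam (inl E)).val := fun h => hCE (Fin.ext h)
  have hae : (lam (inl C)).val ≠ (lam (inl F)).val := fun h => hCF (Fin.ext h)
  have hbc : (lam (inl D)).val ≠ (lam (inl E)).val := fun h => hDE (Fin.ext h)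
  have hbe : (lam (inl D)).val ≠ (lam (inl F)).val := fun h => hDF (Fin.ext h)
  have hce : (lam (inl E)).val ≠ (lam (inl F)).val := fun h => hEF (Fin.ext h)
  have key : ∀ n : ℕ, n < 4 → n = (lam (inl C)).val ∨ n = (lam (inl D)).val ∨
      n = (lam (inl E)).val ∨ n = (lam (inl F)).val := by omega
  constructor
  · ext x
    simp only [Set.mem_range, Set.mem_insert_iff, Set.mem_singleton_iff,
      hA, hB, hG, hZ, Fin.ext_iff]
    constructor
    · rintro ⟨y, hy⟩
      have := hface y
      omega
    · rintro (h | h | h | h)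
      · exact ⟨A, by rw [hA]; exact h.symm⟩
      · exact ⟨B, by rw [hB]; exact h.symm⟩
      · exact ⟨G, by rw [hG]; exact h.symm⟩
      · exact ⟨Z, by rw [hZ]; exact h.symm⟩
  · ext x
    simp only [Set.mem_insert_iff, Set.mem_singleton_iff,
      hA, hB, hG, hZ, Fin.ext_iff]
    constructor
    · intro h
      exact key x.val (by omega)
    · intro h
      omega
end
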